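/- arXiv:1001.1414 — 3 statements merged into one kernel-verified Lean document; each statement's English description precedes it below -/
import Mathlib

section
/- Let C : ℝ → ℝ be a nondecreasing, integrable (on compact intervals) allocation curve with C(x) = 0 for x ≤ 0, and define the payment P(b) = b·C(b) − ∫₀ᵇ C(x) dx. Then for every true value v ≥ 0 and every bid b ≥ 0, the utility v·C(b) − P(b) is maximized at b = v; i.e., v·C(v) − P(v) ≥ v·C(b) − P(b). -/
open MeasureTheory intervalIntegral

/-- Myerson payment with monotone allocation curve is truthful. -/
theorem stmt_0 (C : ℝ → ℝ) (hmono : Monotone C)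
    (hint : ∀ a b : ℝ, IntervalIntegrable C volume a b)
    (hzero : ∀ x ≤ (0:ℝ), C x = 0)
    (P : ℝ → ℝ) (hP : ∀ b, P b = b * C b - ∫ x in (0:ℝ)..b, C x) :
    ∀ v ≥ (0:ℝ), ∀ b ≥ (0:ℝ), v * C b - P b ≤ v * C v - P v := by
  intro v hv b hb
  rw [hP, hP]
  have hsplit : (∫ x in (0:ℝ)..b, C x) - (∫ x in (0:ℝ)..v, C x)
      = ∫ x in v..b, C x := by
    rw [← intervalIntegral.integral_interval_sub_left (hint 0 b) (hint 0 v)]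
  have key : (∫ x in v..b, C x) ≤ (b - v) * C b := by
    rcases le_total v b with h | h
    · have : (∫ x in v..b, C x) ≤ ∫ x in v..b, C b := by
        apply intervalIntegral.integral_mono_on h (hint v b) intervalIntegrable_const
        intro x hx; exact hmono hx.2
      simpa [intervalIntegral.integral_const, smul_eq_mul] using this
    · have : (∫ x in b..v, C b) ≤ ∫ x in b..v, C x := by
        apply intervalIntegral.integral_mono_on h intervalIntegrable_const (hint b v)
        intro x hx; exact hmono hx.1
      rw [intervalIntegral.integral_symm]
      simp only [intervalIntegral.integral_const, smul_eq_mul] at this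
      nlinarith
  nlinarith [hsplit, key]
end

section
/- Suppose C : ℝ → ℝ and P : ℝ → ℝ define a truthful mechanism (for all v, b ≥ 0: v·C(v) − P(v) ≥ v·C(b) − P(b)) with P(0) = 0 and C(0) = 0, and C is continuous. Then P(b) = b·C(b) − ∫₀ᵇ C(x) dx for all b ≥ 0. -/
open MeasureTheory intervalIntegral

/-- Uniqueness of payments (Myerson payment identity) for truthful mechanisms
with continuous allocation curve and normalization P 0 = 0, C 0 = 0. -/
theorem stmt_2 (C P : ℝ → ℝ) (hP0 : P 0 = 0) (hC0 : C 0 = 0)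
    (hcont : Continuous C)
    (truthful : ∀ v ≥ (0:ℝ), ∀ b ≥ (0:ℝ), v * C b - P b ≤ v * C v - P v) :
    ∀ b ≥ (0:ℝ), P b = b * C b - ∫ x in (0:ℝ)..b, C x := by
  have hmono : ∀ a, 0 ≤ a → ∀ b, a ≤ b → C a ≤ C b := by
    intro a ha b hab
    have hb : 0 ≤ b := ha.trans hab
    have h1 := truthful a ha b hb
    have h2 := truthful b hb a ha
    rcases hab.eq_or_lt with rfl | h
    · exact le_rfl
    · nlinarith
  set Q : ℝ → ℝ := fun x => x * C x - ∫ t in (0:ℝ)..x, C t with hQ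
  have hint : ∀ a b : ℝ, IntervalIntegrable C volume a b :=
    fun a b => hcont.intervalIntegrable a b
  have hQdiff : ∀ a, 0 ≤ a → ∀ b, a ≤ b →
      a * (C b - C a) ≤ Q b - Q a ∧ Q b - Q a ≤ b * (C b - C a) := by
    intro a ha b hab
    have hsplit : (∫ t in (0:ℝ)..b, C t) - (∫ t in (0:ℝ)..a, C t)
        = ∫ t in a..b, C t := by
      rw [← intervalIntegral.integral_add_adjacent_intervals (hint 0 a) (hint a b)]
      ring
    have hlo : (b - a) * C a ≤ ∫ t in a..b, C t := by
      have := intervalIntegral.integral_mono_on hab intervalIntegrable_const (hint a b)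
        (fun x hx => hmono a ha x hx.1)
      simpa [smul_eq_mul] using this
    have hhi : (∫ t in a..b, C t) ≤ (b - a) * C b := by
      have := intervalIntegral.integral_mono_on hab (hint a b) intervalIntegrable_const
        (fun x hx => hmono x (ha.trans hx.1) b hx.2)
      simpa [smul_eq_mul] using this
    have hQb : Q b = b * C b - ∫ t in (0:ℝ)..b, C t := rfl
    have hQa : Q a = a * C a - ∫ t in (0:ℝ)..a, C t := rfl
    constructor
    · nlinarith
    · nlinarith
  have hPdiff : ∀ a, 0 ≤ a → ∀ b, a ≤ b →
      a * (C b - C a) ≤ P b - P a ∧ P b - P a ≤ b * (C b - C a) := by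
    intro a ha b hab
    have hb : 0 ≤ b := ha.trans hab
    have h1 := truthful a ha b hb
    have h2 := truthful b hb a ha
    constructor <;> nlinarith
  have hQb' : ∀ y : ℝ, Q y = y * C y - ∫ t in (0:ℝ)..y, C t := fun y => rfl
  clear_value Q
  intro b hb
  have key : ∀ n : ℕ, 0 < n → |P b - Q b| ≤ b * C b / n := by
    intro n hn
    have hn' : (0:ℝ) < n := by exact_mod_cast hn
    set x : ℕ → ℝ := fun i => (i : ℝ) * b / n with hx
    have hx0 : ∀ i : ℕ, 0 ≤ x i := by
      intro i
      have : (0:ℝ) ≤ (i:ℝ) := Nat.cast_nonneg i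
      positivity
    have hxmono : ∀ i : ℕ, x i ≤ x (i+1) := by
      intro i
      simp only [hx]
      push_cast
      gcongr
      linarith
    have hstep : ∀ i : ℕ, x (i+1) - x i = b / n := by
      intro i
      simp only [hx]
      push_cast
      field_simp
      ring
    have hxzero : x 0 = 0 := by simp [hx]
    have hxn : x n = b := by
      simp only [hx]
      field_simp
    have hQ0 : Q 0 = 0 := by simp [hQ, hC0]
    clear_value x
    have htel : P b - Q b = ∑ i ∈ Finset.range n,
        ((P (x (i+1)) - Q (x (i+1))) - (P (x i) - Q (x i))) := by
      rw [Finset.sum_range_sub (fun i => P (x i) - Q (x i))]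
      rw [hxn, hxzero, hP0, hQ0]
      ring
    have hterm : ∀ i ∈ Finset.range n,
        |(P (x (i+1)) - Q (x (i+1))) - (P (x i) - Q (x i))|
          ≤ (b / n) * (C (x (i+1)) - C (x i)) := by
      intro i _
      have hP := hPdiff (x i) (hx0 i) (x (i+1)) (hxmono i)
      have hQd := hQdiff (x i) (hx0 i) (x (i+1)) (hxmono i)
      have hs := hstep i
      have e2 : x (i+1) * (C (x (i+1)) - C (x i))
          = x i * (C (x (i+1)) - C (x i)) + b / n * (C (x (i+1)) - C (x i)) := by
        rw [← hs]; ring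
      rw [abs_le]
      constructor <;> linarith [hP.1, hP.2, hQd.1, hQd.2]
    calc |P b - Q b| ≤ ∑ i ∈ Finset.range n,
          |(P (x (i+1)) - Q (x (i+1))) - (P (x i) - Q (x i))| := by
          rw [htel]; exact Finset.abs_sum_le_sum_abs _ _
      _ ≤ ∑ i ∈ Finset.range n, (b / n) * (C (x (i+1)) - C (x i)) :=
          Finset.sum_le_sum hterm
      _ = (b / n) * (C (x n) - C (x 0)) := by
          rw [← Finset.mul_sum, Finset.sum_range_sub (fun i => C (x i))]
      _ = b * C b / n := by rw [hxn, hxzero, hC0]; ring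
  have h0 : |P b - Q b| ≤ 0 := by
    have ht : Filter.Tendsto (fun n : ℕ => b * C b / n) Filter.atTop (nhds 0) :=
      tendsto_const_div_atTop_nhds_zero_nat _
    refine ge_of_tendsto ht ?_
    filter_upwards [Filter.eventually_gt_atTop 0] with n hn using key n hn
  have hz : P b - Q b = 0 := abs_eq_zero.mp (le_antisymm h0 (abs_nonneg _))
  have : P b = Q b := by linarith
  rw [this, hQb']
end

section
/- In the multi-slot model with k agents, m slots and T rounds, consider an allocation rule that, for fixed others' bids and fixed realization, gives agent i slot j₁ at bid b and a strictly worse (larger-index) slot j₂ > j₁ at the same round t at bid b⁺ > b, with identical allocations for i in all rounds before t. Then there exists a realization ρ (namely one with ρ(t,i,j₁) = 1, ρ(t,i,j₂) = 0, and no clicks for i after round t) such that agent i's total click count under bid b⁺ is strictly less than under bid b. Hence any allocation rule violating weak pointwise monotonicity violates clickwise monotonicity for some realization. -/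
/-- Violating weak pointwise monotonicity yields a realization with strictly
fewer clicks at the higher bid. -/
theorem stmt_4 (T m : ℕ) (A : ℝ → Fin T → Option (Fin m))
    (b bplus : ℝ) (hb : b < bplus) (t : Fin T) (j₁ j₂ : Fin m) (hj : j₁ < j₂)
    (h₁ : A b t = some j₁) (h₂ : A bplus t = some j₂)
    (hpre : ∀ t' : Fin T, t' < t → A b t' = A bplus t') :
    ∃ ρ : Fin T → Fin m → Bool,
      ρ t j₁ = true ∧ ρ t j₂ = false ∧
      (∀ t' : Fin T, t < t' → ∀ j, ρ t' j = false) ∧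
      (∑ t', (match A bplus t' with
              | some j => if ρ t' j then 1 else 0
              | none => 0)) <
        (∑ t', (match A b t' with
              | some j => if ρ t' j then (1:ℕ) else 0
              | none => 0)) := by
  refine ⟨fun t' j => decide (t' ≤ t) && decide (A b t' = some j), ?_, ?_, ?_, ?_⟩
  · simp [h₁]
  · simp [h₁, (hj.ne : j₁ ≠ j₂)]
  · intro t' ht' j
    simp [not_le.mpr ht']
  · apply Finset.sum_lt_sum
    · intro t' _
      rcases lt_trichotomy t' t with h | h | h
      · rw [hpre t' h]
      · subst h
        simp [h₁, h₂, (hj.ne : j₁ ≠ j₂)]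
      · have : ¬ (t' ≤ t) := not_le.mpr h
        rcases A bplus t' with _ | j <;> rcases A b t' with _ | j' <;> simp [this]
    · exact ⟨t, Finset.mem_univ t, by simp [h₁, h₂, (hj.ne : j₁ ≠ j₂)]⟩
end
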